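/- If V ⊆ ℕ is consistent and sound (V ⊆ G(V)), then for every n : ℕ the n-fold iterate G^[n](V) is consistent, and G^[n](V) ⊆ G^[n+1](V); in particular, the sequence of iterates (G^[n](V)) is increasing. -/

import Mathlib

/-- Sentences of the augmented language 𝓛. -/
inductive Sent (B : Type) : Type where
  | base : B → Sent B
  | Tr : ℕ → Sent B
  | exT : Sent B
  | allT : Sent B
  | neg : Sent B → Sent B
  | or : Sent B → Sent B → Sent B
  | and : Sent B → Sent B → Sent B
  | imp : Sent B → Sent B → Sent B
  | iff : Sent B → Sent B → Sent B

variable {B : Type}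

mutual
/-- `isTrue gn v U A` means `#A ∈ G(U)` according to rules (r1)–(r9). -/
def isTrue (gn : Sent B → ℕ) (v : B → Bool) (U : Set ℕ) : Sent B → Prop
  | .base b => v b = true
  | .Tr n => ∃ A : Sent B, n = gn A ∧ gn A ∈ U
  | .exT => ∃ n : ℕ, ∃ A : Sent B, n = gn A ∧ gn A ∈ U
  | .allT => ∀ n : ℕ, ∃ A : Sent B, n = gn A ∧ gn A ∈ U
  | .neg A => isFalse gn v U A
  | .or A C => isTrue gn v U A ∨ isTrue gn v U C
  | .and A C => isTrue gn v U A ∧ isTrue gn v U C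
  | .imp A C => isFalse gn v U A ∨ isTrue gn v U C
  | .iff A C => (isTrue gn v U A ∧ isTrue gn v U C) ∨ (isFalse gn v U A ∧ isFalse gn v U C)

/-- `isFalse gn v U A` means `#A ∈ F(U)` according to rules (r1)–(r9). -/
def isFalse (gn : Sent B → ℕ) (v : B → Bool) (U : Set ℕ) : Sent B → Prop
  | .base b => v b = false
  | .Tr n => ∃ A : Sent B, n = gn A ∧ gn (.neg A) ∈ U
  | .exT => ∀ n : ℕ, ∃ A : Sent B, n = gn A ∧ gn (.neg A) ∈ U
  | .allT => ∃ n : ℕ, ∃ A : Sent B, n = gn A ∧ gn (.neg A) ∈ U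
  | .neg A => isTrue gn v U A
  | .or A C => isFalse gn v U A ∧ isFalse gn v U C
  | .and A C => isFalse gn v U A ∨ isFalse gn v U C
  | .imp A C => isTrue gn v U A ∧ isFalse gn v U C
  | .iff A C => (isTrue gn v U A ∧ isFalse gn v U C) ∨ (isFalse gn v U A ∧ isTrue gn v U C)
end

/-- `G U`: Gödel numbers of sentences declared true over `U`. -/
def GSet (gn : Sent B → ℕ) (v : B → Bool) (U : Set ℕ) : Set ℕ :=
  { n | ∃ A : Sent B, n = gn A ∧ isTrue gn v U A }

/-- `F U`: Gödel numbers of sentences declared false over `U`. -/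
def FSet (gn : Sent B → ℕ) (v : B → Bool) (U : Set ℕ) : Set ℕ :=
  { n | ∃ A : Sent B, n = gn A ∧ isFalse gn v U A }

/-- `U` is consistent: no sentence has both itself and its negation in `U`. -/
def Consistent (gn : Sent B → ℕ) (U : Set ℕ) : Prop :=
  ¬ ∃ A : Sent B, gn A ∈ U ∧ gn (.neg A) ∈ U

/-! `G` is monotone, so soundness `V ⊆ G V` propagates along the iterates and makes them
increasing. `G` also preserves consistency: over a consistent `U` no sentence is both
`G`-true and `F`-false, by structural induction, where the truth-predicate cases reduce, via
injectivity of the numbering, to some `A` with `#A ∈ U` and `#(neg A) ∈ U`. -/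

section

variable (gn : Sent B → ℕ) (v : B → Bool)

theorem isTrue_mono_and_isFalse_mono {U U' : Set ℕ} (h : U ⊆ U') (A : Sent B) :
    (isTrue gn v U A → isTrue gn v U' A) ∧ (isFalse gn v U A → isFalse gn v U' A) := by
  induction A with
  | base b => exact ⟨id, id⟩
  | Tr n => exact ⟨fun ⟨A, hn, hA⟩ => ⟨A, hn, h hA⟩, fun ⟨A, hn, hA⟩ => ⟨A, hn, h hA⟩⟩
  | exT =>
    exact ⟨fun ⟨n, A, hn, hA⟩ => ⟨n, A, hn, h hA⟩,
      fun hF n => (hF n).imp fun _ ⟨hn, hA⟩ => ⟨hn, h hA⟩⟩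
  | allT =>
    exact ⟨fun hT n => (hT n).imp fun _ ⟨hn, hA⟩ => ⟨hn, h hA⟩,
      fun ⟨n, A, hn, hA⟩ => ⟨n, A, hn, h hA⟩⟩
  | neg A ih => exact ⟨ih.2, ih.1⟩
  | or A C ihA ihC => exact ⟨Or.imp ihA.1 ihC.1, And.imp ihA.2 ihC.2⟩
  | and A C ihA ihC => exact ⟨And.imp ihA.1 ihC.1, Or.imp ihA.2 ihC.2⟩
  | imp A C ihA ihC => exact ⟨Or.imp ihA.2 ihC.1, And.imp ihA.1 ihC.2⟩
  | iff A C ihA ihC =>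
    exact ⟨Or.imp (And.imp ihA.1 ihC.1) (And.imp ihA.2 ihC.2),
      Or.imp (And.imp ihA.1 ihC.2) (And.imp ihA.2 ihC.1)⟩

theorem GSet_mono : Monotone (GSet gn v) := fun _ _ h _ ⟨A, hn, hA⟩ =>
  ⟨A, hn, (isTrue_mono_and_isFalse_mono gn v h A).1 hA⟩

variable {gn}

theorem not_isTrue_and_isFalse (hgn : Function.Injective gn) {U : Set ℕ}
    (hU : Consistent gn U) (A : Sent B) : ¬ (isTrue gn v U A ∧ isFalse gn v U A) := by
  induction A with
  | base b =>
    rintro ⟨hT, hF⟩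
    exact Bool.false_ne_true (hF.symm.trans hT)
  | Tr n =>
    rintro ⟨⟨A, rfl, hA⟩, ⟨A', hn, hA'⟩⟩
    obtain rfl := hgn hn
    exact hU ⟨A, hA, hA'⟩
  | exT =>
    rintro ⟨⟨n, A, rfl, hA⟩, hF⟩
    obtain ⟨A', hn, hA'⟩ := hF (gn A)
    obtain rfl := hgn hn
    exact hU ⟨A, hA, hA'⟩
  | allT =>
    rintro ⟨hT, ⟨n, A, rfl, hA⟩⟩
    obtain ⟨A', hn, hA'⟩ := hT (gn A)
    obtain rfl := hgn hn
    exact hU ⟨A, hA', hA⟩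
  | neg A ih => exact fun ⟨hT, hF⟩ => ih ⟨hF, hT⟩
  | or A C ihA ihC =>
    rintro ⟨hA | hC, hFA, hFC⟩
    exacts [ihA ⟨hA, hFA⟩, ihC ⟨hC, hFC⟩]
  | and A C ihA ihC =>
    rintro ⟨⟨hA, hC⟩, hFA | hFC⟩
    exacts [ihA ⟨hA, hFA⟩, ihC ⟨hC, hFC⟩]
  | imp A C ihA ihC =>
    rintro ⟨hFA | hC, hA, hFC⟩
    exacts [ihA ⟨hA, hFA⟩, ihC ⟨hC, hFC⟩]
  | iff A C ihA ihC =>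
    rintro ⟨⟨hA, hC⟩ | ⟨hFA, hFC⟩, ⟨hA', hFC'⟩ | ⟨hFA', hC'⟩⟩
    exacts [ihC ⟨hC, hFC'⟩, ihA ⟨hA, hFA'⟩, ihA ⟨hA', hFA⟩, ihC ⟨hC', hFC⟩]

theorem Consistent.GSet (hgn : Function.Injective gn) {U : Set ℕ} (hU : Consistent gn U) :
    Consistent gn (GSet gn v U) := by
  rintro ⟨A, ⟨A₁, hA₁, hT⟩, ⟨A₂, hA₂, hF⟩⟩
  obtain rfl := hgn hA₁
  obtain rfl := hgn hA₂
  exact not_isTrue_and_isFalse v hgn hU A ⟨hT, hF⟩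

end

/-- iterates of `G` on a consistent sound set are consistent and
form an increasing sequence. -/
theorem stmt_16 {B : Type} (gn : Sent B → ℕ) (hgn : Function.Injective gn)
    (v : B → Bool) (V : Set ℕ) (hV : Consistent gn V) (hsound : V ⊆ GSet gn v V) :
    (∀ n : ℕ, Consistent gn ((GSet gn v)^[n] V) ∧
      (GSet gn v)^[n] V ⊆ (GSet gn v)^[n + 1] V) ∧
    Monotone (fun n : ℕ => (GSet gn v)^[n] V) := by
  have hmono : Monotone (fun n : ℕ => (GSet gn v)^[n] V) :=
    (GSet_mono gn v).monotone_iterate_of_le_map hsound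
  have hcons (n : ℕ) : Consistent gn ((GSet gn v)^[n] V) :=
    Function.Iterate.rec _ hV (fun _ hU => hU.GSet v hgn) n
  exact ⟨fun n => ⟨hcons n, hmono n.le_succ⟩, hmono⟩
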